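/- arXiv:2405.03231 — 4 statements merged into one kernel-verified Lean document; each statement's English description precedes it below -/
import Mathlib

section
/- Let K be a complex Hilbert space, let δ > 0, and let T be a bounded operator on K with ‖T‖ ≤ 1 such that ‖S·T − T·S‖ ≤ δ for every bounded operator S on K with ‖S‖ ≤ 1. Then for every unit vector ξ ∈ K, ‖Tξ − ⟨Tξ, ξ⟩·ξ‖ ≤ δ, where ⟨Tξ, ξ⟩ denotes the inner product of Tξ with ξ. -/
open scoped InnerProductSpace

/-- If a contraction `T` on a Hilbert space almost commutes (up to δ) with every
contraction, then `Tξ` is within δ of its projection onto each unit vector ξ. -/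
theorem norm_sub_inner_smul_le_of_almost_central
    {K : Type*} [NormedAddCommGroup K] [InnerProductSpace ℂ K] [CompleteSpace K]
    (δ : ℝ) (hδ : 0 < δ)
    (T : K →L[ℂ] K) (hT : ‖T‖ ≤ 1)
    (hcomm : ∀ S : K →L[ℂ] K, ‖S‖ ≤ 1 → ‖S * T - T * S‖ ≤ δ) :
    ∀ ξ : K, ‖ξ‖ = 1 → ‖T ξ - ⟪ξ, T ξ⟫_ℂ • ξ‖ ≤ δ := by
  intro ξ hξ
  set S : K →L[ℂ] K := (innerSL ℂ ξ).smulRight ξ with hS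
  have hSapp : ∀ x, S x = ⟪ξ, x⟫_ℂ • ξ := fun x => rfl
  have hSnorm : ‖S‖ ≤ 1 := by
    rw [hS, ContinuousLinearMap.norm_smulRight_apply, innerSL_apply_norm, hξ]
    norm_num
  have key := hcomm S hSnorm
  have happ : (S * T - T * S) ξ = ⟪ξ, T ξ⟫_ℂ • ξ - T ξ := by
    simp only [ContinuousLinearMap.sub_apply, ContinuousLinearMap.mul_apply, hSapp]
    rw [show ⟪ξ, ξ⟫_ℂ = 1 by rw [inner_self_eq_norm_sq_to_K, hξ]; norm_num]
    simp
  calc ‖T ξ - ⟪ξ, T ξ⟫_ℂ • ξ‖ = ‖(S * T - T * S) ξ‖ := by rw [happ, norm_sub_rev]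
    _ ≤ ‖S * T - T * S‖ * ‖ξ‖ := (S * T - T * S).le_opNorm ξ
    _ ≤ δ := by rw [hξ, mul_one]; exact key
end

section
/- Let K be a complex Hilbert space, let δ > 0, and let T be a bounded operator on K with ‖T‖ ≤ 1 such that ‖S·T − T·S‖ ≤ δ for every bounded operator S on K with ‖S‖ ≤ 1. Then for any two mutually orthogonal unit vectors ξ, η ∈ K, one has |⟨Tξ, ξ⟩ − ⟨Tη, η⟩| ≤ δ. -/
open scoped InnerProductSpace

/-! With `S = |η⟩⟨ξ|` (a contraction for unit vectors `ξ, η`), the matrix coefficient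
`⟪η, (S T - T S) ξ⟫` equals `⟪ξ, T ξ⟫ - ⟪η, T η⟫`, so the difference of the diagonal coefficients
is bounded by `‖S T - T S‖ ≤ δ`. -/

namespace InnerProductSpace

variable {𝕜 E : Type*} [RCLike 𝕜] [NormedAddCommGroup E] [InnerProductSpace 𝕜 E]

theorem inner_commutator_rankOne_apply (T : E →L[𝕜] E) (x y : E) :
    ⟪y, (rankOne 𝕜 y x * T - T * rankOne 𝕜 y x) x⟫_𝕜 =
      (‖y‖ ^ 2 : 𝕜) * ⟪x, T x⟫_𝕜 - (‖x‖ ^ 2 : 𝕜) * ⟪y, T y⟫_𝕜 := by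
  simp only [sub_apply, mul_apply_eq_comp, rankOne_apply,
    inner_sub_right, inner_smul_right, map_smul, inner_self_eq_norm_sq_to_K]
  ring

theorem norm_inner_apply_self_sub_le_norm_commutator_rankOne (T : E →L[𝕜] E) {x y : E}
    (hx : ‖x‖ = 1) (hy : ‖y‖ = 1) :
    ‖⟪x, T x⟫_𝕜 - ⟪y, T y⟫_𝕜‖ ≤ ‖rankOne 𝕜 y x * T - T * rankOne 𝕜 y x‖ := by
  have h := inner_commutator_rankOne_apply T x y
  simp only [hx, hy, RCLike.ofReal_one, one_pow, one_mul] at h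
  calc ‖⟪x, T x⟫_𝕜 - ⟪y, T y⟫_𝕜‖
      = ‖⟪y, (rankOne 𝕜 y x * T - T * rankOne 𝕜 y x) x⟫_𝕜‖ := by rw [h]
    _ ≤ ‖y‖ * (‖rankOne 𝕜 y x * T - T * rankOne 𝕜 y x‖ * ‖x‖) :=
        (norm_inner_le_norm _ _).trans (by gcongr; exact ContinuousLinearMap.le_opNorm _ _)
    _ = ‖rankOne 𝕜 y x * T - T * rankOne 𝕜 y x‖ := by rw [hx, hy, one_mul, mul_one]

end InnerProductSpace

theorem abs_inner_diag_sub_le_of_almost_central_general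
    {K : Type*} [NormedAddCommGroup K] [InnerProductSpace ℂ K]
    (δ : ℝ)
    (T : K →L[ℂ] K)
    (hcomm : ∀ S : K →L[ℂ] K, ‖S‖ ≤ 1 → ‖S * T - T * S‖ ≤ δ) :
    ∀ ξ η : K, ‖ξ‖ = 1 → ‖η‖ = 1 → ⟪ξ, η⟫_ℂ = 0 →
      ‖⟪ξ, T ξ⟫_ℂ - ⟪η, T η⟫_ℂ‖ ≤ δ := by
  intro ξ η hξ hη _
  have hS : ‖InnerProductSpace.rankOne ℂ η ξ‖ ≤ 1 := by
    rw [InnerProductSpace.norm_rankOne, hξ, hη, mul_one]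
  exact (InnerProductSpace.norm_inner_apply_self_sub_le_norm_commutator_rankOne T hξ hη).trans
    (hcomm _ hS)

/-- If a contraction `T` on a Hilbert space almost commutes (up to δ) with every
contraction, then its diagonal matrix coefficients at orthogonal unit vectors differ by at
most δ. -/
theorem abs_inner_diag_sub_le_of_almost_central
    {K : Type*} [NormedAddCommGroup K] [InnerProductSpace ℂ K] [CompleteSpace K]
    (δ : ℝ) (hδ : 0 < δ)
    (T : K →L[ℂ] K) (hT : ‖T‖ ≤ 1)
    (hcomm : ∀ S : K →L[ℂ] K, ‖S‖ ≤ 1 → ‖S * T - T * S‖ ≤ δ) :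
    ∀ ξ η : K, ‖ξ‖ = 1 → ‖η‖ = 1 → ⟪ξ, η⟫_ℂ = 0 →
      ‖⟪ξ, T ξ⟫_ℂ - ⟪η, T η⟫_ℂ‖ ≤ δ :=
  abs_inner_diag_sub_le_of_almost_central_general δ T hcomm
end

section
/- Let K be a complex Hilbert space, let δ > 0, and let T be a bounded operator on K with ‖T‖ ≤ 1 such that ‖S·T − T·S‖ ≤ δ for every bounded operator S on K with ‖S‖ ≤ 1. Then there exists λ ∈ ℂ such that ‖T − λ·1_K‖ ≤ 3δ. -/
/-!
Fix a unit vector `u` and put `λ = ⟪u, T u⟫`. For any `x`, the rank-one operator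
`S = ⟪u, ·⟫ x` has norm `‖x‖` and `(S T - T S) u = λ x - T x`, so almost-centrality gives
`‖T x - λ x‖ ≤ δ ‖x‖`, i.e. `‖T - λ 1‖ ≤ δ`.
-/

open ContinuousLinearMap

section Commutator

variable {A : Type*} [NormedRing A] {T : A} {δ : ℝ}

theorem nonneg_of_forall_norm_commutator_le (h : ∀ S : A, ‖S‖ ≤ 1 → ‖S * T - T * S‖ ≤ δ) :
    0 ≤ δ :=
  (norm_nonneg _).trans (h 0 (by simp))

theorem norm_commutator_le_mul_norm (𝕜 : Type*) [RCLike 𝕜] [NormedAlgebra 𝕜 A]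
    (h : ∀ S : A, ‖S‖ ≤ 1 → ‖S * T - T * S‖ ≤ δ) (S : A) :
    ‖S * T - T * S‖ ≤ δ * ‖S‖ := by
  rcases eq_or_ne S 0 with rfl | hS
  · simp
  set c : 𝕜 := (‖S‖⁻¹ : 𝕜)
  have hcomm : (c • S) * T - T * (c • S) = c • (S * T - T * S) := by
    rw [smul_mul_assoc, mul_smul_comm, smul_sub]
  have := h (c • S) (norm_smul_inv_norm hS).le
  have hc : ‖c‖ = ‖S‖⁻¹ := by simp [c]
  rw [hcomm, norm_smul, hc, inv_mul_le_iff₀ (norm_pos_iff.mpr hS)] at this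
  linarith

end Commutator

section RankOne

variable {𝕜 E : Type*} [RCLike 𝕜] [NormedAddCommGroup E] [InnerProductSpace 𝕜 E]

theorem commutator_smulRight_innerSL_apply_self (T : E →L[𝕜] E) {u : E} (hu : ‖u‖ = 1)
    (x : E) :
    ((innerSL 𝕜 u).smulRight x * T - T * (innerSL 𝕜 u).smulRight x) u
      = inner 𝕜 u (T u) • x - T x := by
  simp [hu]

theorem norm_sub_inner_smul_one_le {T : E →L[𝕜] E} {δ : ℝ}
    (h : ∀ S : E →L[𝕜] E, ‖S‖ ≤ 1 → ‖S * T - T * S‖ ≤ δ) {u : E} (hu : ‖u‖ = 1) :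
    ‖T - inner 𝕜 u (T u) • (1 : E →L[𝕜] E)‖ ≤ δ := by
  refine opNorm_le_bound _ (nonneg_of_forall_norm_commutator_le h) fun x => ?_
  set S := (innerSL 𝕜 u).smulRight x
  calc ‖(T - inner 𝕜 u (T u) • (1 : E →L[𝕜] E)) x‖
      = ‖(S * T - T * S) u‖ := by
        rw [commutator_smulRight_innerSL_apply_self T hu, norm_sub_rev]; simp
    _ ≤ ‖S * T - T * S‖ * ‖u‖ := le_opNorm _ _
    _ ≤ δ * ‖S‖ * ‖u‖ := by gcongr; exact norm_commutator_le_mul_norm 𝕜 h S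
    _ = δ * ‖x‖ := by simp [S, norm_smulRight_apply, hu]

theorem exists_norm_sub_smul_one_le {T : E →L[𝕜] E} {δ : ℝ}
    (h : ∀ S : E →L[𝕜] E, ‖S‖ ≤ 1 → ‖S * T - T * S‖ ≤ δ) :
    ∃ l : 𝕜, ‖T - l • (1 : E →L[𝕜] E)‖ ≤ δ := by
  cases subsingleton_or_nontrivial E with
  | inl _ =>
    exact ⟨0, by simpa [Subsingleton.elim T 0] using nonneg_of_forall_norm_commutator_le h⟩
  | inr _ =>
    obtain ⟨v, hv⟩ := exists_ne (0 : E)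
    exact ⟨_, norm_sub_inner_smul_one_le h (norm_smul_inv_norm (𝕜 := 𝕜) hv)⟩

end RankOne

theorem almost_scalar_of_almost_central_general
    {K : Type*} [NormedAddCommGroup K] [InnerProductSpace ℂ K]
    (δ : ℝ)
    (T : K →L[ℂ] K)
    (hcomm : ∀ S : K →L[ℂ] K, ‖S‖ ≤ 1 → ‖S * T - T * S‖ ≤ δ) :
    ∃ l : ℂ, ‖T - l • (1 : K →L[ℂ] K)‖ ≤ 3 * δ := by
  obtain ⟨l, hl⟩ := exists_norm_sub_smul_one_le hcomm
  have hδ := nonneg_of_forall_norm_commutator_le hcomm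
  exact ⟨l, by linarith⟩

/-- A contraction `T` on a Hilbert space which almost commutes (up to δ) with
every contraction is within 3δ of a scalar multiple of the identity. -/
theorem almost_scalar_of_almost_central
    {K : Type*} [NormedAddCommGroup K] [InnerProductSpace ℂ K] [CompleteSpace K]
    (δ : ℝ) (hδ : 0 < δ)
    (T : K →L[ℂ] K) (hT : ‖T‖ ≤ 1)
    (hcomm : ∀ S : K →L[ℂ] K, ‖S‖ ≤ 1 → ‖S * T - T * S‖ ≤ δ) :
    ∃ l : ℂ, ‖T - l • (1 : K →L[ℂ] K)‖ ≤ 3 * δ :=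
  almost_scalar_of_almost_central_general δ T hcomm
end

section
/- Let G be a compact group with normalized Haar probability measure, let A be a C*-algebra, and let α be an action of G on A (a homomorphism into the *-automorphism group of A with g ↦ α_g(a) norm-continuous for each a ∈ A). Define E_α : A → A by the Bochner integral E_α(x) = ∫_G α_g(x) dg. If (u_λ)_{λ∈Λ} is an approximate unit of A, i.e. a net of positive elements with ‖u_λ‖ ≤ 1 such that ‖u_λ·a − a‖ → 0 and ‖a·u_λ − a‖ → 0 for every a ∈ A, then (E_α(u_λ))_{λ∈Λ} is also an approximate unit of A. -/
/-!
Every `α g` is an isometric *-automorphism, so `‖α g u * a - a‖ = ‖u * α g⁻¹ a - α g⁻¹ a‖`.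
The maps `b ↦ u_λ * b` are `1`-Lipschitz, hence equicontinuous, so their pointwise convergence to
the identity is uniform on the compact orbit `{α g a | g ∈ G}`. Averaging a uniformly small
integrand over a probability measure gives `E_α(u_λ) * a → a`, and symmetrically on the right.
Positivity survives the integral because the positive elements are the nonnegative cone of the
spectral order, and the norm bound because each `α g` is isometric.
-/

open MeasureTheory Filter Topology

/-- An element of a C*-algebra is positive iff it is of the form `star y * y`. -/
def IsPositiveElem {A : Type*} [Mul A] [Star A] (x : A) : Prop :=
  ∃ y : A, x = star y * y

lemma IsPositiveElem.map {F A B : Type*} [Mul A] [Star A] [Mul B] [Star B] [FunLike F A B]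
    [MulHomClass F A B] [StarHomClass F A B] (φ : F) {x : A} (hx : IsPositiveElem x) :
    IsPositiveElem (φ x) := by
  obtain ⟨y, rfl⟩ := hx
  exact ⟨φ y, by rw [map_mul, map_star]⟩

lemma isPositiveElem_iff_nonneg {A : Type*} [NonUnitalCStarAlgebra A] [PartialOrder A]
    [StarOrderedRing A] {x : A} : IsPositiveElem x ↔ 0 ≤ x := by
  refine ⟨fun ⟨y, hy⟩ => hy ▸ star_mul_self_nonneg y, fun hx => ⟨CFC.sqrt x, ?_⟩⟩
  rw [(CFC.sqrt_nonneg x).isSelfAdjoint.star_eq, CFC.sqrt_mul_sqrt_self x]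

lemma isPositiveElem_integral {X A : Type*} [MeasurableSpace X] {μ : Measure X}
    [NonUnitalCStarAlgebra A] {f : X → A} (hf : ∀ᵐ x ∂μ, IsPositiveElem (f x)) :
    IsPositiveElem (∫ x, f x ∂μ) := by
  let _ := CStarAlgebra.spectralOrder A
  have := CStarAlgebra.spectralOrderedRing A
  simp only [isPositiveElem_iff_nonneg] at hf ⊢
  exact integral_nonneg_of_ae hf

lemma EquicontinuousOn.tendstoUniformlyOn_of_tendsto {ι X Y : Type*} [TopologicalSpace X]
    [UniformSpace Y] {F : ι → X → Y} {f : X → Y} {l : Filter ι} {K : Set X} (hK : IsCompact K)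
    (hF : EquicontinuousOn F K) (h : ∀ x ∈ K, Tendsto (fun i => F i x) l (𝓝 (f x))) :
    TendstoUniformlyOn F f l K := by
  have := (EquicontinuousOn.tendsto_uniformOnFun_iff_pi' (𝔖 := {K}) (by simpa using hK)
    (by simpa using hF) l f).2 (tendsto_pi_nhds.2 fun x => h x (by simpa using x.2))
  exact UniformOnFun.tendsto_iff_tendstoUniformlyOn.1 this K rfl

lemma TendstoUniformly.tendsto_integral {ι X E : Type*} [MeasurableSpace X] {μ : Measure X}
    [IsFiniteMeasure μ] [NormedAddCommGroup E] [NormedSpace ℝ E] {l : Filter ι} {F : ι → X → E}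
    {f : X → E} (hF : ∀ i, Integrable (F i) μ) (hf : Integrable f μ) (h : TendstoUniformly F f l) :
    Tendsto (fun i => ∫ x, F i x ∂μ) l (𝓝 (∫ x, f x ∂μ)) := by
  rw [Metric.tendsto_nhds]
  intro ε hε
  have hδ : 0 < ε / (μ.real Set.univ + 1) := by positivity
  filter_upwards [Metric.tendstoUniformly_iff.1 h _ hδ] with i hi
  rw [dist_eq_norm, ← integral_sub (hF i) hf]
  calc ‖∫ x, (F i x - f x) ∂μ‖ ≤ ε / (μ.real Set.univ + 1) * μ.real Set.univ :=
        norm_integral_le_of_norm_le_const (.of_forall fun x => by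
          rw [← dist_eq_norm, dist_comm]; exact (hi x).le)
    _ < ε := by
        rw [div_mul_eq_mul_div, div_lt_iff₀ (by positivity)]
        nlinarith [measureReal_nonneg (μ := μ) (s := Set.univ)]

section Action

variable {G A : Type*} [TopologicalSpace G] [Group G] [CompactSpace G] [NonUnitalCStarAlgebra A]
  {α : G → (A ≃⋆ₐ[ℂ] A)}

lemma tendstoUniformly_apply_apply_inv {ι : Type*} {l : Filter ι}
    (hinv : ∀ g b, α g (α g⁻¹ b) = b) {a : A} (ha : Continuous fun g => α g a) {T : ι → A → A}
    (hT : Equicontinuous T) (hlim : ∀ b, Tendsto (fun i => T i b) l (𝓝 b)) :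
    TendstoUniformly (fun i g => α g (T i (α g⁻¹ a))) (fun _ => a) l := by
  have hK : TendstoUniformlyOn T id l (Set.range fun g => α g a) :=
    (hT.equicontinuousOn _).tendstoUniformlyOn_of_tendsto (isCompact_range ha) fun b _ => hlim b
  rw [Metric.tendstoUniformly_iff]
  intro ε hε
  filter_upwards [Metric.tendstoUniformlyOn_iff.1 hK ε hε] with i hi g
  calc dist a (α g (T i (α g⁻¹ a))) = dist (α g⁻¹ a) (T i (α g⁻¹ a)) := by
        rw [← (StarAlgEquiv.isometry (α g)).dist_eq (α g⁻¹ a), hinv]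
    _ < ε := hi _ ⟨g⁻¹, rfl⟩

variable [MeasurableSpace G] [BorelSpace G] (μ : Measure G) [IsProbabilityMeasure μ]
  {ι : Type*} {l : Filter ι} {u : ι → A}

lemma tendsto_integral_apply_mul (hinv : ∀ g b, α g (α g⁻¹ b) = b)
    (hcont : ∀ a, Continuous fun g => α g a) (hu : ∀ i, ‖u i‖₊ ≤ 1)
    (hlim : ∀ b, Tendsto (fun i => u i * b) l (𝓝 b)) (a : A) :
    Tendsto (fun i => (∫ g, α g (u i) ∂μ) * a) l (𝓝 a) := by
  have hT : Equicontinuous fun i (b : A) => u i * b :=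
    (LipschitzWith.uniformEquicontinuous _ 1 fun i =>
      (lipschitzWith_smul (u i)).weaken (hu i)).equicontinuous
  have h := tendstoUniformly_apply_apply_inv hinv (hcont a) hT hlim
  simp only [map_mul, hinv] at h
  have hint {f : G → A} (hf : Continuous f) : Integrable f μ :=
    hf.integrable_of_hasCompactSupport (.of_compactSpace f)
  simpa [integral_mul_const_of_integrable (hint (hcont _))] using
    h.tendsto_integral (fun i => hint ((hcont (u i)).mul continuous_const)) (integrable_const a)

lemma tendsto_mul_integral_apply (hinv : ∀ g b, α g (α g⁻¹ b) = b)
    (hcont : ∀ a, Continuous fun g => α g a) (hu : ∀ i, ‖u i‖₊ ≤ 1)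
    (hlim : ∀ b, Tendsto (fun i => b * u i) l (𝓝 b)) (a : A) :
    Tendsto (fun i => a * ∫ g, α g (u i) ∂μ) l (𝓝 a) := by
  have hT : Equicontinuous fun i (b : A) => b * u i :=
    (LipschitzWith.uniformEquicontinuous _ 1 fun i =>
      (lipschitzWith_smul (MulOpposite.op (u i))).weaken (hu i)).equicontinuous
  have h := tendstoUniformly_apply_apply_inv hinv (hcont a) hT hlim
  simp only [map_mul, hinv] at h
  have hint {f : G → A} (hf : Continuous f) : Integrable f μ :=
    hf.integrable_of_hasCompactSupport (.of_compactSpace f)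
  simpa [integral_const_mul_of_integrable (hint (hcont _))] using
    h.tendsto_integral (fun i => hint (continuous_const.mul (hcont (u i)))) (integrable_const a)

end Action

theorem approximateUnit_average_isApproximateUnit_general
    {G A : Type*} [TopologicalSpace G] [Group G] [CompactSpace G]
    [MeasurableSpace G] [BorelSpace G]
    [NonUnitalCStarAlgebra A]
    (μ : Measure G) [IsProbabilityMeasure μ]
    -- an action α of G on A
    (α : G → (A ≃⋆ₐ[ℂ] A))
    (hone : α 1 = StarAlgEquiv.refl ℂ A)
    (hmul : ∀ g h : G, ∀ a : A, α (g * h) a = α g (α h a))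
    (hcont : ∀ a : A, Continuous fun g : G => α g a)
    -- an approximate unit (u_λ) of A
    {Λ : Type*} [SemilatticeSup Λ]
    (u : Λ → A)
    (hpos : ∀ l : Λ, IsPositiveElem (u l))
    (hnorm : ∀ l : Λ, ‖u l‖ ≤ 1)
    (happrox : ∀ a : A,
      Tendsto (fun l : Λ => ‖u l * a - a‖) atTop (nhds 0) ∧
      Tendsto (fun l : Λ => ‖a * u l - a‖) atTop (nhds 0)) :
    -- then (E_α(u_λ)) is an approximate unit of A, where E_α(x) = ∫_G α_g(x) dg
    (∀ l : Λ, IsPositiveElem (∫ g : G, α g (u l) ∂μ) ∧ ‖∫ g : G, α g (u l) ∂μ‖ ≤ 1) ∧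
    (∀ a : A,
      Tendsto (fun l : Λ => ‖(∫ g : G, α g (u l) ∂μ) * a - a‖) atTop (nhds 0) ∧
      Tendsto (fun l : Λ => ‖a * (∫ g : G, α g (u l) ∂μ) - a‖) atTop (nhds 0)) := by
  have hinv (g : G) (b : A) : α g (α g⁻¹ b) = b := by
    rw [← hmul, mul_inv_cancel, hone]
    rfl
  have hu (l : Λ) : ‖u l‖₊ ≤ 1 := by exact_mod_cast hnorm l
  simp only [← tendsto_iff_norm_sub_tendsto_zero] at happrox ⊢
  refine ⟨fun l => ⟨?_, ?_⟩, fun a => ⟨?_, ?_⟩⟩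
  · exact isPositiveElem_integral (.of_forall fun g => (hpos l).map (α g))
  · simpa using norm_integral_le_of_norm_le_const (μ := μ)
      (.of_forall fun g => (StarAlgEquiv.norm_map (α g) (u l)).trans_le (hnorm l))
  · exact tendsto_integral_apply_mul μ hinv hcont hu (fun b => (happrox b).1) a
  · exact tendsto_mul_integral_apply μ hinv hcont hu (fun b => (happrox b).2) a

/-- Averaging an approximate unit of a C*-algebra over a compact group action
with respect to the normalized Haar measure yields again an approximate unit. -/
theorem approximateUnit_average_isApproximateUnit
    {G A : Type*} [TopologicalSpace G] [Group G] [IsTopologicalGroup G] [CompactSpace G]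
    [MeasurableSpace G] [BorelSpace G]
    [NonUnitalCStarAlgebra A]
    (μ : Measure G) [μ.IsHaarMeasure] [IsProbabilityMeasure μ]
    -- an action α of G on A
    (α : G → (A ≃⋆ₐ[ℂ] A))
    (hone : α 1 = StarAlgEquiv.refl ℂ A)
    (hmul : ∀ g h : G, ∀ a : A, α (g * h) a = α g (α h a))
    (hcont : ∀ a : A, Continuous fun g : G => α g a)
    -- an approximate unit (u_λ) of A
    {Λ : Type*} [Nonempty Λ] [SemilatticeSup Λ]
    (u : Λ → A)
    (hpos : ∀ l : Λ, IsPositiveElem (u l))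
    (hnorm : ∀ l : Λ, ‖u l‖ ≤ 1)
    (happrox : ∀ a : A,
      Tendsto (fun l : Λ => ‖u l * a - a‖) atTop (nhds 0) ∧
      Tendsto (fun l : Λ => ‖a * u l - a‖) atTop (nhds 0)) :
    -- then (E_α(u_λ)) is an approximate unit of A, where E_α(x) = ∫_G α_g(x) dg
    (∀ l : Λ, IsPositiveElem (∫ g : G, α g (u l) ∂μ) ∧ ‖∫ g : G, α g (u l) ∂μ‖ ≤ 1) ∧
    (∀ a : A,
      Tendsto (fun l : Λ => ‖(∫ g : G, α g (u l) ∂μ) * a - a‖) atTop (nhds 0) ∧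
      Tendsto (fun l : Λ => ‖a * (∫ g : G, α g (u l) ∂μ) - a‖) atTop (nhds 0)) :=
  approximateUnit_average_isApproximateUnit_general μ α hone hmul hcont u hpos hnorm happrox
end
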